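/- arXiv:1310.5454 — 6 statements merged into one kernel-verified Lean document; each statement's English description precedes it below -/
import Mathlib

section
/- Let G be a finite group acting on a finite set Ω, N ⊴ G normal, Δ a regular N-orbit containing v, and H = Stab_G(v). Suppose that Σ_{h ∈ H, h ≠ 1} |C_N(h)| < |N|. Then there exists w ∈ Δ fixed by no non-identity element of H; in particular Stab_G(v) ∩ Stab_G(w) = 1. -/
open scoped Classical

/-- If `Δ` is a regular `N`-orbit containing `v`, `H = Stab_G(v)`,
and `Σ_{1 ≠ h ∈ H} |C_N(h)| < |N|`, then some `w ∈ Δ` is fixed by no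
non-identity element of `H`; in particular `Stab_G(v) ∩ Stab_G(w) = 1`. -/
theorem stmt_8 {G Ω : Type*} [Group G] [Fintype G] [MulAction G Ω]
    (N : Subgroup G) [N.Normal] (v : Ω)
    (hreg : ∀ n : N, (n : G) • v = v → n = 1)
    (hsum : ∑ h ∈ Finset.univ.filter
        (fun h : G => h ∈ MulAction.stabilizer G v ∧ h ≠ 1),
        Nat.card {n : N // (n : G) * h = h * (n : G)} < Nat.card N) :
    ∃ w ∈ MulAction.orbit N v,
      MulAction.stabilizer G v ⊓ MulAction.stabilizer G w = ⊥ := by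
  classical
  set S : Finset G := Finset.univ.filter
    (fun h : G => h ∈ MulAction.stabilizer G v ∧ h ≠ 1) with hS
  set B : G → Finset N :=
    fun h => Finset.univ.filter (fun n : N => (n : G) * h = h * (n : G)) with hB
  have hcard : ∀ h : G, (B h).card = Nat.card {n : N // (n : G) * h = h * (n : G)} := by
    intro h
    rw [Nat.card_eq_fintype_card, Fintype.card_subtype]
  have hlt : (S.biUnion B).card < Finset.univ.card (α := N) := by
    calc (S.biUnion B).card ≤ ∑ h ∈ S, (B h).card := Finset.card_biUnion_le
      _ = ∑ h ∈ S, Nat.card {n : N // (n : G) * h = h * (n : G)} := by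
          exact Finset.sum_congr rfl fun h _ => hcard h
      _ < Nat.card N := hsum
      _ = Finset.univ.card := by rw [Nat.card_eq_fintype_card, Finset.card_univ]
  have hex : ∃ n : N, n ∉ S.biUnion B := by
    by_contra hc
    push_neg at hc
    have hsub : (Finset.univ : Finset N) ⊆ S.biUnion B := fun n _ => hc n
    exact absurd (Finset.card_le_card hsub) (by omega)
  obtain ⟨n, hn⟩ := hex
  refine ⟨(n : G) • v, ⟨n, rfl⟩, ?_⟩
  rw [eq_bot_iff]
  intro g hg
  simp only [Subgroup.mem_inf, MulAction.mem_stabilizer_iff] at hg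
  obtain ⟨hg1, hg2⟩ := hg
  rw [Subgroup.mem_bot]
  by_contra hgne
  have hmem : (n : G)⁻¹ * (g * n * g⁻¹) ∈ N :=
    N.mul_mem (N.inv_mem n.2) (Subgroup.Normal.conj_mem ‹N.Normal› n n.2 g)
  have hfix : ((n : G)⁻¹ * (g * (n : G) * g⁻¹)) • v = v := by
    have h1 : g⁻¹ • v = v := by rw [inv_smul_eq_iff, hg1]
    calc ((n : G)⁻¹ * (g * (n : G) * g⁻¹)) • v
        = (n : G)⁻¹ • g • (n : G) • g⁻¹ • v := by
          simp only [mul_smul]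
      _ = v := by rw [h1, hg2, inv_smul_smul]
  have h1 := hreg ⟨_, hmem⟩ hfix
  have h2 : (n : G)⁻¹ * (g * (n : G) * g⁻¹) = 1 := congrArg Subtype.val h1
  have hcomm : (n : G) * g = g * (n : G) := by
    rw [inv_mul_eq_one] at h2
    calc (n : G) * g = (g * (n : G) * g⁻¹) * g := by rw [← h2]
      _ = g * (n : G) := by group
  have hgS : g ∈ S := by
    simp only [hS, Finset.mem_filter, Finset.mem_univ, true_and]
    exact ⟨hg1, hgne⟩
  exact hn (Finset.mem_biUnion.mpr ⟨g, hgS, Finset.mem_filter.mpr ⟨Finset.mem_univ n, hcomm⟩⟩)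
end

section
/- Let G be a finite group, N ⊴ G a normal subgroup, and suppose G acts faithfully and irreducibly on a vector space V with N containing the scalars Z and N/Z a non-Abelian simple group such that the centralizer C_G(N) is Abelian. If M/Z is any minimal normal subgroup of G/Z with M ≠ N and M/Z non-Abelian, then [M, N] = 1, which contradicts C_G(N) being Abelian; hence N/Z is the unique minimal normal subgroup of G/Z and G/Z is almost simple. -/
/-! Let `M/Z` be minimal normal and non-Abelian in `G/Z`; by minimality `(M ∩ N)Z/Z` is trivial or
all of `M/Z`. In the first case `⁅M, N⁆ ≤ M ∩ N ≤ Z` is central; as the simple non-Abelian group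
`N/Z` is perfect, `N = ⁅N, N⁆ Z`, and the three subgroups lemma makes `M` centralize `⁅N, N⁆`,
hence `N`. Then `M ≤ C_G(N)` is Abelian, a contradiction. In the second case `Z ≤ M ≤ N`, and
simplicity of `N/Z` forces `M = N`. -/

namespace Group

open Subgroup in
theorem isPerfect_of_isSimpleGroup {Q : Type*} [Group Q] [IsSimpleGroup Q]
    (hQ : ¬ ∀ a b : Q, a * b = b * a) : IsPerfect Q := by
  refine ⟨(commutator_normal ⊤ ⊤).eq_bot_or_eq_top.resolve_left fun hbot => hQ fun a b => ?_⟩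
  exact mem_centralizer_iff.1 (commutator_eq_bot_iff_le_centralizer.1 hbot (mem_top b)) a
    (mem_top a)

end Group

namespace Subgroup

variable {G : Type*} [Group G]

theorem le_commutator_sup_of_isPerfect_quotient {Z N : Subgroup G} [(Z.subgroupOf N).Normal]
    [Group.IsPerfect (N ⧸ Z.subgroupOf N)] : N ≤ ⁅N, N⁆ ⊔ Z := by
  have hρ := QuotientGroup.mk'_surjective (Z.subgroupOf N)
  have htop : _root_.commutator N ⊔ Z.subgroupOf N = ⊤ := by
    rw [← QuotientGroup.ker_mk' (Z.subgroupOf N), ← comap_map_eq, _root_.commutator,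
      map_commutator, map_top_of_surjective _ hρ, ← _root_.commutator,
      Group.IsPerfect.commutator_eq_top, comap_top]
  calc N = (_root_.commutator N ⊔ Z.subgroupOf N).map N.subtype := by
        rw [htop, ← MonoidHom.range_eq_map, range_subtype]
    _ = ⁅N, N⁆ ⊔ Z ⊓ N := by
        rw [map_sup, map_subtype_commutator, subgroupOf_map_subtype]
    _ ≤ ⁅N, N⁆ ⊔ Z := sup_le_sup_left inf_le_left _

theorem le_centralizer_of_commutator_le_center {M N : Subgroup G}
    (hN : N ≤ ⁅N, N⁆ ⊔ center G) (hMN : ⁅M, N⁆ ≤ center G) : M ≤ centralizer N := by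
  have hMNN : ⁅⁅M, N⁆, N⁆ = ⊥ :=
    commutator_eq_bot_iff_le_centralizer.2 (hMN.trans (center_le_centralizer _))
  have hNNM : ⁅⁅N, N⁆, M⁆ = ⊥ :=
    commutator_commutator_eq_bot_of_rotate (by rwa [commutator_comm N M]) hMNN
  rw [le_centralizer_iff]
  exact hN.trans (sup_le (commutator_eq_bot_iff_le_centralizer.1 hNNM) (center_le_centralizer _))

theorem eq_or_eq_of_isSimpleGroup_quotient {Z M N : Subgroup G} [(Z.subgroupOf N).Normal]
    [IsSimpleGroup (N ⧸ Z.subgroupOf N)] [(M.subgroupOf N).Normal] (hZM : Z ≤ M)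
    (hMN : M ≤ N) : M = Z ∨ M = N := by
  have hρ := QuotientGroup.mk'_surjective (Z.subgroupOf N)
  rcases ((inferInstance : (M.subgroupOf N).Normal).map _ hρ).eq_bot_or_eq_top with hbot | htop
  · left
    rw [map_eq_bot_iff, QuotientGroup.ker_mk'] at hbot
    exact le_antisymm (fun m hm => hbot (show ⟨m, hMN hm⟩ ∈ M.subgroupOf N from hm)) hZM
  · right
    rw [← map_top_of_surjective _ hρ] at htop
    have hNM := map_le_map_iff.1 htop.ge
    rw [QuotientGroup.ker_mk', sup_eq_left.2 (subgroupOf_mono _ hZM), top_le_iff,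
      subgroupOf_eq_top] at hNM
    exact le_antisymm hMN hNM

end Subgroup

open Subgroup in
theorem stmt_9_general {G : Type*} [Group G] (Z N : Subgroup G)
    [Z.Normal] [(Z.subgroupOf N).Normal] [N.Normal]
    (hZc : Z ≤ Subgroup.center G) (hZN : Z ≤ N)
    (hsimple : IsSimpleGroup (N ⧸ Z.subgroupOf N))
    (hnonab : ¬ ∀ a b : N ⧸ Z.subgroupOf N, a * b = b * a)
    (hcent : ∀ a ∈ Subgroup.centralizer (N : Set G),
      ∀ b ∈ Subgroup.centralizer (N : Set G), a * b = b * a) :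
    ∀ M : Subgroup G, M.Normal → Z ≤ M →
      (Subgroup.map (QuotientGroup.mk' Z) M ≠ ⊥) →
      (∀ K : Subgroup (G ⧸ Z), K.Normal →
        K ≤ Subgroup.map (QuotientGroup.mk' Z) M →
        K = ⊥ ∨ K = Subgroup.map (QuotientGroup.mk' Z) M) →
      (¬ ∀ a ∈ Subgroup.map (QuotientGroup.mk' Z) M,
        ∀ b ∈ Subgroup.map (QuotientGroup.mk' Z) M, a * b = b * a) →
      M = N := by
  intro M hM hZM hne hmin hMnonab
  have hπ := QuotientGroup.mk'_surjective Z
  rcases hmin _ ((normal_inf_normal M N).map _ hπ) (map_mono inf_le_left) with hMNZ | heq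
  · rw [Subgroup.map_eq_bot_iff, QuotientGroup.ker_mk'] at hMNZ
    have := Group.isPerfect_of_isSimpleGroup hnonab
    have hMC : M ≤ centralizer N := le_centralizer_of_commutator_le_center
      (le_commutator_sup_of_isPerfect_quotient.trans (sup_le_sup_left hZc _))
      (commutator_le_inf M N |>.trans hMNZ |>.trans hZc)
    refine absurd ?_ hMnonab
    rintro _ ⟨x, hx, rfl⟩ _ ⟨y, hy, rfl⟩
    rw [← map_mul, ← map_mul, hcent x (hMC hx) y (hMC hy)]
  · have hMN : M ≤ N := by
      have := map_le_map_iff.1 heq.ge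
      rw [QuotientGroup.ker_mk'] at this
      exact this.trans (sup_le inf_le_right hZN)
    rcases eq_or_eq_of_isSimpleGroup_quotient hZM hMN with rfl | h
    · exact absurd ((Subgroup.map_eq_bot_iff _).2 (QuotientGroup.ker_mk' M).ge) hne
    · exact h

/-- Let `Z ≤ N ⊴ G` with `Z` central, `N/Z` non-Abelian simple,
and `C_G(N)` Abelian (as follows from a faithful irreducible linear action).
Then any normal subgroup `M` of `G` containing `Z` whose image `M/Z` is a
non-Abelian minimal normal subgroup of `G/Z` must equal `N`; that is, `N/Z` is
the unique such minimal normal subgroup of `G/Z` (whence `G/Z` is almost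
simple). -/
theorem stmt_9 {G : Type*} [Group G] [Finite G] (Z N : Subgroup G)
    [Z.Normal] [(Z.subgroupOf N).Normal] [N.Normal]
    (hZc : Z ≤ Subgroup.center G) (hZN : Z ≤ N)
    (hsimple : IsSimpleGroup (N ⧸ Z.subgroupOf N))
    (hnonab : ¬ ∀ a b : N ⧸ Z.subgroupOf N, a * b = b * a)
    (hcent : ∀ a ∈ Subgroup.centralizer (N : Set G),
      ∀ b ∈ Subgroup.centralizer (N : Set G), a * b = b * a) :
    ∀ M : Subgroup G, M.Normal → Z ≤ M →
      (Subgroup.map (QuotientGroup.mk' Z) M ≠ ⊥) →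
      (∀ K : Subgroup (G ⧸ Z), K.Normal →
        K ≤ Subgroup.map (QuotientGroup.mk' Z) M →
        K = ⊥ ∨ K = Subgroup.map (QuotientGroup.mk' Z) M) →
      (¬ ∀ a ∈ Subgroup.map (QuotientGroup.mk' Z) M,
        ∀ b ∈ Subgroup.map (QuotientGroup.mk' Z) M, a * b = b * a) →
      M = N :=
  stmt_9_general Z N hZc hZN hsimple hnonab hcent
end

section
/- Let V₁ be a 2-dimensional vector space over a finite field F_q with q ≥ 5, let G₁ ≤ GL(V₁), and suppose x₁, y₁ is a basis of V₁ such that every g ∈ G₁ stabilizing the line ⟨x₁⟩ also stabilizes the line ⟨y₁⟩. Then for any α ∈ F_q \ {0,1}, the vectors x₁⊗x₁ and y₁⊗(y₁ + αx₁) in V₁⊗V₁ form a base for the central wreath product G₁ ≀_c S₂ acting on V₁⊗V₁ (i.e., the pointwise stabilizer of these two tensors is trivial). -/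
/-!
Every element of `G₁ ≀_c S₂` is `g ⊗ h` or `(g ⊗ h) ∘ swap` with `g, h ∈ G₁`. Fixing `x ⊗ x` forces
`g x = a x`, `h x = a⁻¹ x`, so `g` and `h` stabilize `⟨x⟩` and hence, by hypothesis, also `⟨y⟩`:
both are diagonal in the basis `x, y`. Comparing coordinates of `y ⊗ (y + α x)` and its image in
the basis `(x, y) ⊗ (x, y)` then rules out the swap (writing `h y = ν y`, an `x ⊗ y` term
`α a ν ≠ 0` appears) and, without the swap, forces `g = a • 1` and `h = a⁻¹ • 1`, so that `g ⊗ h = 1`.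
-/

open TensorProduct

section CentralWreath

variable {R V : Type*} [CommSemiring R] [AddCommMonoid V] [Module R V]

lemma TensorProduct.comm_mul_map (f g : Module.End R V) :
    (TensorProduct.comm R V V).toLinearMap * map f g =
      map g f * (TensorProduct.comm R V V).toLinearMap :=
  (map_comp_comm_eq g f).symm

lemma TensorProduct.map_mul_comm_mul_map_mul_comm (f g f' g' : Module.End R V) :
    map f g * (TensorProduct.comm R V V).toLinearMap *
        (map f' g' * (TensorProduct.comm R V V).toLinearMap) = map (f * g') (g * f') := by
  rw [mul_assoc, ← mul_assoc _ (map f' g'), comm_mul_map, mul_assoc,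
    show (TensorProduct.comm R V V).toLinearMap * (TensorProduct.comm R V V).toLinearMap = 1
      from comm_comp_comm R V V, mul_one, ← TensorProduct.map_mul]

def centralWreath (G : Subgroup (Module.End R V)ˣ) : Subgroup (Module.End R (V ⊗[R] V))ˣ :=
  Subgroup.closure
    ({u | ∃ g ∈ G, ∃ h ∈ G, (u : Module.End R (V ⊗[R] V)) = map (g : Module.End R V) h} ∪
      {u | (u : Module.End R (V ⊗[R] V)) = (TensorProduct.comm R V V).toLinearMap})

theorem exists_eq_map_of_mem_centralWreath {G : Subgroup (Module.End R V)ˣ}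
    {u : (Module.End R (V ⊗[R] V))ˣ} (hu : u ∈ centralWreath G) :
    ∃ g ∈ G, ∃ h ∈ G, (u : Module.End R (V ⊗[R] V)) = map (g : Module.End R V) h ∨
      (u : Module.End R (V ⊗[R] V)) =
        map (g : Module.End R V) h * (TensorProduct.comm R V V).toLinearMap := by
  induction hu using Subgroup.closure_induction with
  | mem u hu =>
    rcases hu with ⟨g, hg, h, hh, hu⟩ | hu
    · exact ⟨g, hg, h, hh, .inl hu⟩
    · refine ⟨1, one_mem G, 1, one_mem G, .inr ?_⟩
      rw [hu, Units.val_one, TensorProduct.map_one, one_mul]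
  | one => exact ⟨1, one_mem G, 1, one_mem G, .inl TensorProduct.map_one.symm⟩
  | mul u v _ _ ihu ihv =>
    obtain ⟨g, hg, h, hh, hu | hu⟩ := ihu <;> obtain ⟨g', hg', h', hh', hv | hv⟩ := ihv
    · refine ⟨g * g', mul_mem hg hg', h * h', mul_mem hh hh', .inl ?_⟩
      simp only [Units.val_mul, hu, hv, TensorProduct.map_mul]
    · refine ⟨g * g', mul_mem hg hg', h * h', mul_mem hh hh', .inr ?_⟩
      simp only [Units.val_mul, hu, hv, ← mul_assoc, TensorProduct.map_mul]
    · refine ⟨g * h', mul_mem hg hh', h * g', mul_mem hh hg', .inr ?_⟩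
      simp only [Units.val_mul, hu, hv, mul_assoc, comm_mul_map, TensorProduct.map_mul]
    · refine ⟨g * h', mul_mem hg hh', h * g', mul_mem hh hg', .inl ?_⟩
      simp only [Units.val_mul, hu, hv, map_mul_comm_mul_map_mul_comm]
  | inv u _ ihu =>
    obtain ⟨g, hg, h, hh, hu | hu⟩ := ihu
    · refine ⟨g⁻¹, inv_mem hg, h⁻¹, inv_mem hh, .inl <| Units.inv_eq_of_mul_eq_one_right ?_⟩
      rw [hu, ← TensorProduct.map_mul, Units.mul_inv, Units.mul_inv, TensorProduct.map_one]
    · refine ⟨h⁻¹, inv_mem hh, g⁻¹, inv_mem hg, .inr <| Units.inv_eq_of_mul_eq_one_right ?_⟩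
      rw [hu, map_mul_comm_mul_map_mul_comm, Units.mul_inv, Units.mul_inv, TensorProduct.map_one]

end CentralWreath

theorem Module.Basis.exists_smul_of_tmul_eq_tmul {ι F V : Type*} [Field F] [AddCommGroup V]
    [Module F V] (b : Module.Basis ι F V) {v w : V} {i j : ι} (h : v ⊗ₜ[F] w = b i ⊗ₜ b j) :
    ∃ a c : F, a * c = 1 ∧ v = a • b i ∧ w = c • b j := by
  classical
  have hcoord (k l : ι) :
      b.repr w l * b.repr v k = Finsupp.single j (1 : F) l * Finsupp.single i (1 : F) k := by
    simpa using congrArg (fun t => (b.tensorProduct b).repr t (k, l)) h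
  have hc : b.repr w j * b.repr v i = 1 := by simpa using hcoord i j
  refine ⟨b.repr v i, b.repr w j, by rw [mul_comm, hc], b.ext_elem fun k => ?_,
    b.ext_elem fun l => ?_⟩
  · by_cases hk : k = i
    · simp [hk]
    · simpa [hk, Finsupp.single_apply, Ne.symm hk, left_ne_zero_of_mul_eq_one hc] using hcoord k j
  · by_cases hl : l = j
    · simp [hl]
    · simpa [hl, Finsupp.single_apply, Ne.symm hl, right_ne_zero_of_mul_eq_one hc] using hcoord i l

section Diagonal

variable {F V : Type*} [Field F] [AddCommGroup V] [Module F V] (b : Module.Basis (Fin 2) F V)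
variable {a c μ ν α : F}

theorem Module.Basis.eq_smul_one_of_apply_eq {f : Module.End F V} {a : F}
    (h₀ : f (b 0) = a • b 0) (h₁ : f (b 1) = a • b 1) : f = a • 1 :=
  b.ext <| Fin.forall_fin_two.2 ⟨h₀, h₁⟩

theorem map_eq_one_of_fixes {g h : Module.End F V} (hα : α ≠ 0) (hac : a * c = 1)
    (hgx : g (b 0) = a • b 0) (hhx : h (b 0) = c • b 0)
    (hgy : g (b 1) = μ • b 1) (hhy : h (b 1) = ν • b 1)
    (hfix : map g h (b 1 ⊗ₜ (b 1 + α • b 0)) = b 1 ⊗ₜ (b 1 + α • b 0)) :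
    map g h = 1 := by
  have hcoord (k l : Fin 2) := congrArg (fun t => (b.tensorProduct b).repr t (k, l)) hfix
  have hνμ : ν * μ = 1 := by simpa [hgy, hhy, hhx] using hcoord 1 1
  have hcμ : c * μ = 1 := by simpa [hgy, hhy, hhx, hα, mul_assoc] using hcoord 1 0
  have hμ : μ = a := (eq_inv_of_mul_eq_one_right hcμ).trans (eq_inv_of_mul_eq_one_left hac).symm
  have hν : ν = c := by
    rw [eq_inv_of_mul_eq_one_left hνμ, hμ, inv_eq_of_mul_eq_one_right hac]
  rw [b.eq_smul_one_of_apply_eq hgx (hμ ▸ hgy), b.eq_smul_one_of_apply_eq hhx (hν ▸ hhy),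
    map_smul_left, map_smul_right, smul_smul, hac, one_smul, TensorProduct.map_one]

theorem map_mul_comm_apply_ne {g h : Module.End F V} (hα : α ≠ 0) (ha : a ≠ 0) (hν : ν ≠ 0)
    (hgx : g (b 0) = a • b 0) (hgy : g (b 1) = μ • b 1) (hhy : h (b 1) = ν • b 1) :
    (map g h * (TensorProduct.comm F V V).toLinearMap) (b 1 ⊗ₜ (b 1 + α • b 0)) ≠
      b 1 ⊗ₜ (b 1 + α • b 0) := by
  intro hfix
  have := congrArg (fun t => (b.tensorProduct b).repr t (0, 1)) hfix
  simp [hgx, hgy, hhy, hα, ha, hν] at this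

theorem exists_smul_of_tmul_eq_of_stabilizes_line {G : Subgroup (Module.End F V)ˣ}
    (hline : ∀ g ∈ G, (g : Module.End F V) (b 0) ∈ Submodule.span F {b 0} →
      (g : Module.End F V) (b 1) ∈ Submodule.span F {b 1})
    {g h : (Module.End F V)ˣ} (hg : g ∈ G) (hh : h ∈ G)
    (hfix : (g : Module.End F V) (b 0) ⊗ₜ[F] (h : Module.End F V) (b 0) = b 0 ⊗ₜ b 0) :
    ∃ a c μ ν : F, a * c = 1 ∧ (g : Module.End F V) (b 0) = a • b 0 ∧
      (h : Module.End F V) (b 0) = c • b 0 ∧ (g : Module.End F V) (b 1) = μ • b 1 ∧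
      (h : Module.End F V) (b 1) = ν • b 1 := by
  obtain ⟨a, c, hac, hgx, hhx⟩ := b.exists_smul_of_tmul_eq_tmul hfix
  obtain ⟨μ, hμ⟩ := Submodule.mem_span_singleton.1
    (hline g hg (hgx ▸ Submodule.smul_mem _ a (Submodule.mem_span_singleton_self _)))
  obtain ⟨ν, hν⟩ := Submodule.mem_span_singleton.1
    (hline h hh (hhx ▸ Submodule.smul_mem _ c (Submodule.mem_span_singleton_self _)))
  exact ⟨a, c, μ, ν, hac, hgx, hhx, hμ.symm, hν.symm⟩

theorem eq_one_of_mem_centralWreath_of_fixes {G : Subgroup (Module.End F V)ˣ}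
    (hline : ∀ g ∈ G, (g : Module.End F V) (b 0) ∈ Submodule.span F {b 0} →
      (g : Module.End F V) (b 1) ∈ Submodule.span F {b 1})
    (hα : α ≠ 0) {u : (Module.End F (V ⊗[F] V))ˣ}
    (hu : u ∈ centralWreath G)
    (hfix₀ : (u : Module.End F (V ⊗[F] V)) (b 0 ⊗ₜ b 0) = b 0 ⊗ₜ b 0)
    (hfix₁ : (u : Module.End F (V ⊗[F] V)) (b 1 ⊗ₜ (b 1 + α • b 0)) = b 1 ⊗ₜ (b 1 + α • b 0)) :
    u = 1 := by
  obtain ⟨g, hg, h, hh, hu | hu⟩ := exists_eq_map_of_mem_centralWreath hu <;>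
    rw [hu] at hfix₀ hfix₁ <;>
    obtain ⟨a, c, μ, ν, hac, hgx, hhx, hgy, hhy⟩ :=
      exists_smul_of_tmul_eq_of_stabilizes_line b hline hg hh (by simpa using hfix₀)
  · exact Units.ext (hu.trans (map_eq_one_of_fixes b hα hac hgx hhx hgy hhy hfix₁))
  · have hν : ν ≠ 0 := by
      rintro rfl
      refine b.ne_zero 1 (((Module.End.isUnit_iff _).1 h.isUnit).1 ?_)
      rw [hhy, zero_smul, map_zero]
    exact (map_mul_comm_apply_ne b hα (left_ne_zero_of_mul_eq_one hac) hν hgx hgy hhy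
      hfix₁).elim

end Diagonal

theorem stmt_10_general {F V : Type*} [Field F]
    [AddCommGroup V] [Module F V]
    (G₁ : Subgroup (Module.End F V)ˣ)
    (x₁ y₁ : V) (hbasis : LinearIndependent F ![x₁, y₁])
    (hspan : Submodule.span F {x₁, y₁} = ⊤)
    (hline : ∀ g ∈ G₁, (g : Module.End F V) x₁ ∈ Submodule.span F {x₁} →
      (g : Module.End F V) y₁ ∈ Submodule.span F {y₁})
    (α : F) (hα0 : α ≠ 0) :
    ∀ u ∈ Subgroup.closure
      ({u : (Module.End F (V ⊗[F] V))ˣ |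
          ∃ g ∈ G₁, ∃ h ∈ G₁, (u : Module.End F (V ⊗[F] V)) =
            TensorProduct.map (g : Module.End F V) (h : Module.End F V)} ∪
        {u : (Module.End F (V ⊗[F] V))ˣ |
          (u : Module.End F (V ⊗[F] V)) =
            (TensorProduct.comm F V V).toLinearMap}),
      (u : Module.End F (V ⊗[F] V)) (x₁ ⊗ₜ[F] x₁) = x₁ ⊗ₜ[F] x₁ →
      (u : Module.End F (V ⊗[F] V)) (y₁ ⊗ₜ[F] (y₁ + α • x₁)) =
        y₁ ⊗ₜ[F] (y₁ + α • x₁) →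
      u = 1 := by
  intro u hu hfix₀ hfix₁
  let b := Module.Basis.mk hbasis (by rw [Matrix.range_cons_cons_empty, hspan])
  have hb₀ : b 0 = x₁ := Module.Basis.mk_apply ..
  have hb₁ : b 1 = y₁ := Module.Basis.mk_apply ..
  rw [← hb₀] at hfix₀
  rw [← hb₀, ← hb₁] at hline hfix₁
  exact eq_one_of_mem_centralWreath_of_fixes b hline hα0 hu hfix₀ hfix₁

/-- Let `V₁` be 2-dimensional over `F_q`, `q ≥ 5`, with basis
`x₁, y₁` such that every `g ∈ G₁` stabilizing the line `⟨x₁⟩` also stabilizes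
`⟨y₁⟩`. Then for any `α ∈ F_q \ {0,1}`, the vectors `x₁⊗x₁` and
`y₁⊗(y₁ + αx₁)` form a base for the central wreath product `G₁ ≀_c S₂`
(the subgroup of `GL(V₁⊗V₁)` generated by the maps `g⊗h`, `g,h ∈ G₁`, and the
swap). -/
theorem stmt_10 {F V : Type*} [Field F] [Fintype F] (hq : 5 ≤ Fintype.card F)
    [AddCommGroup V] [Module F V] (hdim : Module.finrank F V = 2)
    (G₁ : Subgroup (Module.End F V)ˣ)
    (x₁ y₁ : V) (hbasis : LinearIndependent F ![x₁, y₁])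
    (hspan : Submodule.span F {x₁, y₁} = ⊤)
    (hline : ∀ g ∈ G₁, (g : Module.End F V) x₁ ∈ Submodule.span F {x₁} →
      (g : Module.End F V) y₁ ∈ Submodule.span F {y₁})
    (α : F) (hα0 : α ≠ 0) (hα1 : α ≠ 1) :
    ∀ u ∈ Subgroup.closure
      ({u : (Module.End F (V ⊗[F] V))ˣ |
          ∃ g ∈ G₁, ∃ h ∈ G₁, (u : Module.End F (V ⊗[F] V)) =
            TensorProduct.map (g : Module.End F V) (h : Module.End F V)} ∪
        {u : (Module.End F (V ⊗[F] V))ˣ |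
          (u : Module.End F (V ⊗[F] V)) =
            (TensorProduct.comm F V V).toLinearMap}),
      (u : Module.End F (V ⊗[F] V)) (x₁ ⊗ₜ[F] x₁) = x₁ ⊗ₜ[F] x₁ →
      (u : Module.End F (V ⊗[F] V)) (y₁ ⊗ₜ[F] (y₁ + α • x₁)) =
        y₁ ⊗ₜ[F] (y₁ + α • x₁) →
      u = 1 :=
  stmt_10_general G₁ x₁ y₁ hbasis hspan hline α hα0
end

section
/- Let V₁ be a 2-dimensional vector space over F₃ with basis x₁, y₁. Then the three vectors x₁⊗x₁, y₁⊗y₁, x₁⊗y₁ in V₁⊗V₁ form a base for the group GL(V₁) ≀_c S₂ acting on V₁⊗V₁: any element of this group fixing all three vectors is the identity. -/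
open scoped TensorProduct

/-!
Every element of `GL(V) ≀ S₂` is `g ⊗ h` or `(g ⊗ h) ∘ swap`. Comparing coordinates, a pure
tensor `v ⊗ w` equal to a basis tensor `xᵢ ⊗ xⱼ` forces `v = a • xᵢ` and `w = a⁻¹ • xⱼ` for a
unit `a`. If `g ⊗ h` fixes `x ⊗ x`, `y ⊗ y` and `x ⊗ y`, the three scalars obtained this way
coincide, so `g = a • 1`, `h = a⁻¹ • 1` and `g ⊗ h = 1`. If `(g ⊗ h) ∘ swap` fixed `x ⊗ x` and
`x ⊗ y`, then `h x` would be a nonzero multiple of both `x` and `y`.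
-/

namespace TensorProduct

variable {R M : Type*} [CommRing R] [AddCommGroup M] [Module R M]

theorem comm_mul_map_s11 (g h : Module.End R M) :
    (TensorProduct.comm R M M).toLinearMap * map g h =
      map h g * (TensorProduct.comm R M M).toLinearMap :=
  (map_comp_comm_eq h g).symm

theorem comm_mul_comm :
    (TensorProduct.comm R M M).toLinearMap * (TensorProduct.comm R M M).toLinearMap = 1 :=
  comm_comp_comm R M M

variable (R M) in
/-- Allowing arbitrary, not only invertible, `g` and `h` makes this closed under multiplication;
it contains the wreath product `GL(M) ≀ S₂`. -/
def wreathSubmonoid : Submonoid (Module.End R (M ⊗[R] M)) where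
  carrier := {f | ∃ g h : Module.End R M,
    f = map g h ∨ f = map g h * (TensorProduct.comm R M M).toLinearMap}
  one_mem' := ⟨1, 1, .inl TensorProduct.map_one.symm⟩
  mul_mem' := by
    rintro _ _ ⟨g, h, rfl | rfl⟩ ⟨g', h', rfl | rfl⟩
    · exact ⟨g * g', h * h', .inl (TensorProduct.map_mul ..).symm⟩
    · exact ⟨g * g', h * h', .inr (by rw [TensorProduct.map_mul, mul_assoc])⟩
    · refine ⟨g * h', h * g', .inr ?_⟩
      rw [mul_assoc, comm_mul_map_s11, ← mul_assoc, ← TensorProduct.map_mul]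
    · refine ⟨g * h', h * g', .inl ?_⟩
      rw [mul_assoc, ← mul_assoc _ (map g' h'), comm_mul_map_s11, mul_assoc, comm_mul_comm,
        mul_one, ← TensorProduct.map_mul]

theorem coe_mem_wreathSubmonoid_of_mem_closure {u : (Module.End R (M ⊗[R] M))ˣ}
    (hu : u ∈ Subgroup.closure
      ({u : (Module.End R (M ⊗[R] M))ˣ | ∃ g h : (Module.End R M)ˣ,
          (u : Module.End R (M ⊗[R] M)) = map (g : Module.End R M) (h : Module.End R M)} ∪
        {u | (u : Module.End R (M ⊗[R] M)) = (TensorProduct.comm R M M).toLinearMap})) :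
    (u : Module.End R (M ⊗[R] M)) ∈ wreathSubmonoid R M := by
  induction hu using Subgroup.closure_induction'' with
  | mem u hu =>
    rcases hu with ⟨g, h, hu⟩ | hu
    · exact ⟨g, h, .inl hu⟩
    · exact ⟨1, 1, .inr (by rw [hu, TensorProduct.map_one, one_mul])⟩
  | inv_mem u hu =>
    rcases hu with ⟨g, h, hu⟩ | hu
    · refine ⟨↑g⁻¹, ↑h⁻¹, .inl (Units.inv_eq_of_mul_eq_one_right ?_)⟩
      rw [hu, ← TensorProduct.map_mul, Units.mul_inv, Units.mul_inv, TensorProduct.map_one]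
    · refine ⟨1, 1, .inr ?_⟩
      rw [Units.inv_eq_of_mul_eq_one_right (by rw [hu, comm_mul_comm]),
        TensorProduct.map_one, one_mul]
  | one => exact one_mem _
  | mul u v _ _ hu hv => exact mul_mem hu hv

theorem exists_unit_of_tmul_eq_basis {ι : Type*} (b : Module.Basis ι R M) {i j : ι} {v w : M}
    (hvw : v ⊗ₜ[R] w = b i ⊗ₜ b j) : ∃ a : Rˣ, v = a • b i ∧ w = a⁻¹ • b j := by
  have hcoord : ∀ k l, b.repr w l * b.repr v k = b.repr (b j) l * b.repr (b i) k := by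
    intro k l
    simpa only [Module.Basis.tensorProduct_repr_tmul_apply, smul_eq_mul] using
      congrArg (fun t => (b.tensorProduct b).repr t (k, l)) hvw
  have hunit : b.repr v i * b.repr w j = 1 := by simpa [mul_comm] using hcoord i j
  refine ⟨⟨_, _, hunit, mul_comm (b.repr w j) _ ▸ hunit⟩, b.ext_elem fun k => ?_,
    b.ext_elem fun l => ?_⟩
  · have hk := hcoord k j
    simp only [Module.Basis.repr_self, Finsupp.single_eq_same, one_mul] at hk
    simp only [Units.smul_def, map_smul, Finsupp.smul_apply, smul_eq_mul,
      Module.Basis.repr_self]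
    linear_combination (-b.repr v k) * hunit + b.repr v i * hk
  · have hl := hcoord i l
    simp only [Module.Basis.repr_self, Finsupp.single_eq_same, mul_one] at hl
    simp only [Units.smul_def, Units.inv_mk, map_smul, Finsupp.smul_apply, smul_eq_mul,
      Module.Basis.repr_self]
    linear_combination (-b.repr w l) * hunit + b.repr w j * hl

theorem units_smul_basis_injective {ι : Type*} (b : Module.Basis ι R M) {i : ι} {a c : Rˣ}
    (h : a • b i = c • b i) : a = c :=
  Units.ext <| by simpa [Units.smul_def] using congrArg (fun v => b.repr v i) h

variable (b : Module.Basis (Fin 2) R M)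

theorem map_eq_one_of_fixes {g h : Module.End R M}
    (h00 : map g h (b 0 ⊗ₜ b 0) = b 0 ⊗ₜ b 0) (h11 : map g h (b 1 ⊗ₜ b 1) = b 1 ⊗ₜ b 1)
    (h01 : map g h (b 0 ⊗ₜ b 1) = b 0 ⊗ₜ b 1) : map g h = 1 := by
  rw [map_tmul] at h00 h11 h01
  obtain ⟨a, hg0, hh0⟩ := exists_unit_of_tmul_eq_basis b h00
  obtain ⟨c, hg1, hh1⟩ := exists_unit_of_tmul_eq_basis b h11
  obtain ⟨e, hg0', hh1'⟩ := exists_unit_of_tmul_eq_basis b h01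
  obtain rfl : a = e := units_smul_basis_injective b (hg0.symm.trans hg0')
  obtain rfl : c = a := inv_injective (units_smul_basis_injective b (hh1.symm.trans hh1'))
  have hg : g = (c : R) • 1 := b.ext fun k => by fin_cases k <;> simpa [Units.smul_def]
  have hh : h = ((c⁻¹ : Rˣ) : R) • 1 := b.ext fun k => by fin_cases k <;> simpa [Units.smul_def]
  rw [hg, hh, map_smul_left, map_smul_right, TensorProduct.map_one, smul_smul, Units.mul_inv,
    one_smul]

theorem map_mul_comm_apply_tmul_ne [Nontrivial R] {g h : Module.End R M}
    (h00 : (map g h * (TensorProduct.comm R M M).toLinearMap) (b 0 ⊗ₜ b 0) = b 0 ⊗ₜ b 0) :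
    (map g h * (TensorProduct.comm R M M).toLinearMap) (b 0 ⊗ₜ b 1) ≠ b 0 ⊗ₜ b 1 := by
  intro h01
  simp only [Module.End.mul_apply, LinearEquiv.coe_coe, comm_tmul, map_tmul] at h00 h01
  obtain ⟨a, -, hh0⟩ := exists_unit_of_tmul_eq_basis b h00
  obtain ⟨c, -, hh0'⟩ := exists_unit_of_tmul_eq_basis b h01
  simpa [Units.smul_def] using congrArg (fun v => b.repr v 0) (hh0.symm.trans hh0')

theorem eq_one_of_mem_wreathSubmonoid_of_fixes [Nontrivial R] {f : Module.End R (M ⊗[R] M)}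
    (hf : f ∈ wreathSubmonoid R M)
    (h00 : f (b 0 ⊗ₜ b 0) = b 0 ⊗ₜ b 0) (h11 : f (b 1 ⊗ₜ b 1) = b 1 ⊗ₜ b 1)
    (h01 : f (b 0 ⊗ₜ b 1) = b 0 ⊗ₜ b 1) : f = 1 := by
  obtain ⟨g, h, rfl | rfl⟩ := hf
  · exact map_eq_one_of_fixes b h00 h11 h01
  · exact absurd h01 (map_mul_comm_apply_tmul_ne b h00)

end TensorProduct

theorem stmt_11_general {V : Type*} [AddCommGroup V] [Module (ZMod 3) V]
    (x₁ y₁ : V) (hbasis : LinearIndependent (ZMod 3) ![x₁, y₁])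
    (hspan : Submodule.span (ZMod 3) {x₁, y₁} = ⊤) :
    ∀ u ∈ Subgroup.closure
      ({u : (Module.End (ZMod 3) (V ⊗[ZMod 3] V))ˣ |
          ∃ g h : (Module.End (ZMod 3) V)ˣ,
            (u : Module.End (ZMod 3) (V ⊗[ZMod 3] V)) =
              TensorProduct.map (g : Module.End (ZMod 3) V)
                (h : Module.End (ZMod 3) V)} ∪
        {u : (Module.End (ZMod 3) (V ⊗[ZMod 3] V))ˣ |
          (u : Module.End (ZMod 3) (V ⊗[ZMod 3] V)) =
            (TensorProduct.comm (ZMod 3) V V).toLinearMap}),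
      (u : Module.End (ZMod 3) (V ⊗[ZMod 3] V)) (x₁ ⊗ₜ[ZMod 3] x₁) =
          x₁ ⊗ₜ[ZMod 3] x₁ →
      (u : Module.End (ZMod 3) (V ⊗[ZMod 3] V)) (y₁ ⊗ₜ[ZMod 3] y₁) =
          y₁ ⊗ₜ[ZMod 3] y₁ →
      (u : Module.End (ZMod 3) (V ⊗[ZMod 3] V)) (x₁ ⊗ₜ[ZMod 3] y₁) =
          x₁ ⊗ₜ[ZMod 3] y₁ →
      u = 1 := by
  intro u hu hxx hyy hxy
  let b : Module.Basis (Fin 2) (ZMod 3) V :=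
    .mk hbasis (by rw [Matrix.range_cons_cons_empty, hspan])
  have hb0 : b 0 = x₁ := by simp [b]
  have hb1 : b 1 = y₁ := by simp [b]
  exact Units.ext <| TensorProduct.eq_one_of_mem_wreathSubmonoid_of_fixes b
    (TensorProduct.coe_mem_wreathSubmonoid_of_mem_closure hu)
    (by rwa [hb0]) (by rwa [hb1]) (by rwa [hb0, hb1])

/-- If `V₁` is a 2-dimensional space over `F₃` with basis
`x₁, y₁`, then `x₁⊗x₁`, `y₁⊗y₁`, `x₁⊗y₁` form a base for `GL(V₁) ≀_c S₂`
(the subgroup of `GL(V₁⊗V₁)` generated by all `g⊗h` and the swap). -/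
theorem stmt_11 {V : Type*} [AddCommGroup V] [Module (ZMod 3) V]
    (hdim : Module.finrank (ZMod 3) V = 2)
    (x₁ y₁ : V) (hbasis : LinearIndependent (ZMod 3) ![x₁, y₁])
    (hspan : Submodule.span (ZMod 3) {x₁, y₁} = ⊤) :
    ∀ u ∈ Subgroup.closure
      ({u : (Module.End (ZMod 3) (V ⊗[ZMod 3] V))ˣ |
          ∃ g h : (Module.End (ZMod 3) V)ˣ,
            (u : Module.End (ZMod 3) (V ⊗[ZMod 3] V)) =
              TensorProduct.map (g : Module.End (ZMod 3) V)
                (h : Module.End (ZMod 3) V)} ∪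
        {u : (Module.End (ZMod 3) (V ⊗[ZMod 3] V))ˣ |
          (u : Module.End (ZMod 3) (V ⊗[ZMod 3] V)) =
            (TensorProduct.comm (ZMod 3) V V).toLinearMap}),
      (u : Module.End (ZMod 3) (V ⊗[ZMod 3] V)) (x₁ ⊗ₜ[ZMod 3] x₁) =
          x₁ ⊗ₜ[ZMod 3] x₁ →
      (u : Module.End (ZMod 3) (V ⊗[ZMod 3] V)) (y₁ ⊗ₜ[ZMod 3] y₁) =
          y₁ ⊗ₜ[ZMod 3] y₁ →
      (u : Module.End (ZMod 3) (V ⊗[ZMod 3] V)) (x₁ ⊗ₜ[ZMod 3] y₁) =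
          x₁ ⊗ₜ[ZMod 3] y₁ →
      u = 1 :=
  stmt_11_general x₁ y₁ hbasis hspan
end

section
/- Let V be a finite vector space over F_q with q ≥ 5, let Z ≤ G ≤ GL(V) where Z is the group of scalars, and suppose x, y ∈ V is a base for G such that N_G(⟨x⟩) ∩ N_G(⟨x,y⟩) ⊆ N_G(⟨y⟩). Then x and x + y form a strong base for G: any g ∈ G stabilizing both lines ⟨x⟩ and ⟨x+y⟩ is a scalar transformation. -/
private lemma aux_scalar {F V : Type*} [Field F] [AddCommGroup V] [Module F V]
    (G : Subgroup (Module.End F V)ˣ)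
    (hZ : ∀ c : Fˣ, ∃ g ∈ G, (g : Module.End F V) = (c : F) • 1)
    (x y : V)
    (hbase : ∀ g ∈ G, (g : Module.End F V) x = x →
      (g : Module.End F V) y = y → g = 1)
    (g : (Module.End F V)ˣ) (hg : g ∈ G) (c : F) (hc : c ≠ 0)
    (h1 : (g : Module.End F V) x = c • x) (h2 : (g : Module.End F V) y = c • y) :
    (g : Module.End F V) = c • 1 := by
  obtain ⟨z, hzG, hz⟩ := hZ (Units.mk0 c hc)
  have hzx : (z : Module.End F V) x = c • x := by rw [hz]; simp
  have hzy : (z : Module.End F V) y = c • y := by rw [hz]; simp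
  have hx : ((z⁻¹ * g : (Module.End F V)ˣ) : Module.End F V) x = x := by
    rw [Units.val_mul, Module.End.mul_apply, h1, ← hzx, ← Module.End.mul_apply,
      ← Units.val_mul, inv_mul_cancel]
    simp
  have hy : ((z⁻¹ * g : (Module.End F V)ˣ) : Module.End F V) y = y := by
    rw [Units.val_mul, Module.End.mul_apply, h2, ← hzy, ← Module.End.mul_apply,
      ← Units.val_mul, inv_mul_cancel]
    simp
  have h := hbase _ (mul_mem (inv_mem hzG) hg) hx hy
  have hzg : z = g := by rwa [inv_mul_eq_one] at h
  rw [← hzg, hz]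
  norm_num

/-- Let `Z ≤ G ≤ GL(V)` over `F_q`, `q ≥ 5`, and let `x, y` be a
base for `G` with `N_G(⟨x⟩) ∩ N_G(⟨x,y⟩) ⊆ N_G(⟨y⟩)`. Then `x, x + y` is a
strong base: any `g ∈ G` stabilizing the lines `⟨x⟩` and `⟨x+y⟩` is scalar. -/
theorem stmt_12 {F V : Type*} [Field F] [Fintype F] (hq : 5 ≤ Fintype.card F)
    [AddCommGroup V] [Module F V]
    (G : Subgroup (Module.End F V)ˣ)
    (hZ : ∀ c : Fˣ, ∃ g ∈ G, (g : Module.End F V) = (c : F) • 1)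
    (x y : V)
    (hbase : ∀ g ∈ G, (g : Module.End F V) x = x →
      (g : Module.End F V) y = y → g = 1)
    (hN : ∀ g ∈ G, (g : Module.End F V) x ∈ Submodule.span F {x} →
      ((g : Module.End F V) x ∈ Submodule.span F {x, y} ∧
        (g : Module.End F V) y ∈ Submodule.span F {x, y}) →
      (g : Module.End F V) y ∈ Submodule.span F {y}) :
    ∀ g ∈ G, (g : Module.End F V) x ∈ Submodule.span F {x} →
      (g : Module.End F V) (x + y) ∈ Submodule.span F {x + y} →
      ∃ c : F, (g : Module.End F V) = c • 1 := by
  intro g hg hx hxy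
  obtain ⟨a, ha⟩ := Submodule.mem_span_singleton.mp hx
  obtain ⟨b, hb⟩ := Submodule.mem_span_singleton.mp hxy
  -- g y = g(x+y) - g x ∈ span {x, y}
  have hgy_val : (g : Module.End F V) y = b • (x + y) - a • x := by
    have h : (g : Module.End F V) (x + y) = (g : Module.End F V) x + (g : Module.End F V) y :=
      map_add _ _ _
    rw [← hb, ← ha] at h
    rw [h]; abel
  have hxmem : x ∈ Submodule.span F ({x, y} : Set V) :=
    Submodule.subset_span (by simp)
  have hymem : y ∈ Submodule.span F ({x, y} : Set V) :=
    Submodule.subset_span (by simp)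
  have hgy_span : (g : Module.End F V) y ∈ Submodule.span F ({y} : Set V) := by
    apply hN g hg hx
    constructor
    · rw [← ha]
      exact Submodule.smul_mem _ _ hxmem
    · rw [hgy_val]
      exact sub_mem (Submodule.smul_mem _ _ (add_mem hxmem hymem)) (Submodule.smul_mem _ _ hxmem)
  obtain ⟨c, hc⟩ := Submodule.mem_span_singleton.mp hgy_span
  have hinj : Function.Injective (g : Module.End F V) := by
    intro u v huv
    have h : ((g⁻¹ : (Module.End F V)ˣ) : Module.End F V) ((g : Module.End F V) u)
        = ((g⁻¹ : (Module.End F V)ˣ) : Module.End F V) ((g : Module.End F V) v) := by rw [huv]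
    simpa [← Module.End.mul_apply, ← Units.val_mul] using h
  by_cases hx0 : x = 0
  · by_cases hy0 : y = 0
    · refine ⟨1, ?_⟩
      apply aux_scalar G hZ x y hbase g hg 1 one_ne_zero
      · rw [hx0]; simp
      · rw [hy0]; simp
    · have hc0 : c ≠ 0 := by
        intro h
        apply hy0
        apply hinj
        rw [← hc, h, zero_smul, map_zero]
      refine ⟨c, ?_⟩
      apply aux_scalar G hZ x y hbase g hg c hc0
      · rw [hx0]; simp
      · rw [← hc]
  · have ha0 : a ≠ 0 := by
      intro h
      apply hx0
      apply hinj
      rw [← ha, h, zero_smul, map_zero]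
    have hgy : (g : Module.End F V) y = a • y := by
      by_cases hdep : y ∈ Submodule.span F ({x} : Set V)
      · obtain ⟨t, ht⟩ := Submodule.mem_span_singleton.mp hdep
        rw [← ht, map_smul, ← ha, smul_comm]
      · have heq : a • x + c • y = b • x + b • y := by
          have h : (g : Module.End F V) (x + y) = (g : Module.End F V) x + (g : Module.End F V) y :=
            map_add _ _ _
          rw [← hb, ← ha, ← hc] at h
          linear_combination (norm := module) h.symm
        have hbc : b = c := by
          by_contra hne
          apply hdep
          apply Submodule.mem_span_singleton.mpr
          refine ⟨(c - b)⁻¹ * (b - a), ?_⟩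
          have hcb : c - b ≠ 0 := sub_ne_zero.mpr fun h => hne h.symm
          have h2 : (c - b) • y = (b - a) • x := by
            linear_combination (norm := module) heq
          have h3 := congrArg (fun v => (c - b)⁻¹ • v) h2
          simp only [smul_smul, inv_mul_cancel₀ hcb, one_smul] at h3
          rw [mul_smul] at h3 ⊢
          exact h3.symm ▸ rfl
        have hab : a = b := by
          by_contra hne
          apply hx0
          have h2 : (a - b) • x = (b - c) • y := by
            linear_combination (norm := module) heq
          rw [← hbc, sub_self, zero_smul] at h2
          rcases smul_eq_zero.mp h2 with h | h
          · exact absurd (sub_eq_zero.mp h) hne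
          · exact h
        rw [← hc, ← hbc, ← hab]
    exact ⟨a, aux_scalar G hZ x y hbase g hg a ha0 ha.symm hgy⟩
end

section
/- Let Γ = ΓL(1, q²) be the full semilinear group on a 2-dimensional F_q-space V = F_{q²} (q even, q > 2), viewed as GL(1,q²).2 ≤ GL(2,q), and let Z ≅ F_q^× be the scalar group. Then for any nonzero x ∈ V, the stabilizer N_Γ(⟨x⟩_{F_q}) of the F_q-line through x equals Z × C₂, and the involution g in this stabilizer satisfies g(x) = x and g(y) = y + x for some y ∈ V with {x,y} an F_q-basis of V. -/
/-!
Let `φ` be the Frobenius `v ↦ v ^ q`, which generates `Gal(T/F) = {1, φ}`. An element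
`v ↦ a • σ v` of `ΓL(1, q²)` maps `x` into `F • x` exactly when `σ = 1` and `a ∈ F`, or
`σ = φ` and `a ∈ F • (x / φ x)`; so the stabiliser is generated by the scalars and
`g : v ↦ (x / φ x) • φ v`. This `g` is an involution fixing `x`, and its fixed points are
`F • x` because `φ` fixes only `F`. In characteristic `2`, `g w - w` is fixed by `g` for every
`w`; choosing `w` with `g w ≠ w` and rescaling gives `y` with `g y = y + x`.
-/

open Module FiniteField

namespace FiniteField

variable {F T : Type*} [Field F] [Fintype F] [Field T] [Finite T] [Algebra F T]

theorem mem_range_algebraMap_of_frobeniusAlgEquivOfAlgebraic_apply_eq {w : T}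
    (hw : frobeniusAlgEquivOfAlgebraic F T w = w) : w ∈ Set.range (algebraMap F T) := by
  refine (IsGalois.mem_range_algebraMap_iff_fixed w).2 fun σ ↦ ?_
  obtain ⟨n, rfl⟩ := (bijective_frobeniusAlgEquivOfAlgebraic_pow F T).2 σ
  rw [AlgEquiv.coe_pow]
  exact Function.iterate_fixed hw _

variable (h : finrank F T = 2)
include h

theorem frobeniusAlgEquivOfAlgebraic_involutive :
    Function.Involutive (frobeniusAlgEquivOfAlgebraic F T) := fun v ↦ by
  have hφ := pow_orderOf_eq_one (frobeniusAlgEquivOfAlgebraic F T)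
  rw [orderOf_frobeniusAlgEquivOfAlgebraic, h, pow_two] at hφ
  exact congr($hφ v)

theorem algEquiv_eq_one_or_eq_frobeniusAlgEquivOfAlgebraic (σ : T ≃ₐ[F] T) :
    σ = 1 ∨ σ = frobeniusAlgEquivOfAlgebraic F T := by
  obtain ⟨⟨n, hn⟩, rfl⟩ := (bijective_frobeniusAlgEquivOfAlgebraic_pow F T).2 σ
  rw [h] at hn
  interval_cases n <;> simp

end FiniteField

section LineInvolution

variable {F T : Type*} [Field F] [Fintype F] [Field T] [Finite T] [Algebra F T]

local notation "φ" => frobeniusAlgEquivOfAlgebraic F T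

noncomputable def lineInvolution (x : T) : Module.End F T :=
  (x / φ x) • (φ).toLinearMap

theorem lineInvolution_apply (x v : T) : lineInvolution (F := F) x v = x / φ x * φ v := rfl

variable {x : T}

theorem lineInvolution_apply_self (hx : x ≠ 0) : lineInvolution (F := F) x x = x := by
  rw [lineInvolution_apply, div_mul_cancel₀ x ((map_ne_zero _).2 hx)]

theorem lineInvolution_mul_self (h : finrank F T = 2) (hx : x ≠ 0) :
    lineInvolution (F := F) x * lineInvolution x = 1 := by
  ext v
  have hφx : φ x ≠ 0 := (map_ne_zero _).2 hx
  rw [Module.End.mul_apply, lineInvolution_apply, lineInvolution_apply, map_mul, map_div₀,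
    frobeniusAlgEquivOfAlgebraic_involutive h, frobeniusAlgEquivOfAlgebraic_involutive h,
    Module.End.one_apply]
  field_simp

theorem lineInvolution_apply_eq_self_iff (hx : x ≠ 0) {v : T} :
    lineInvolution (F := F) x v = v ↔ v ∈ Submodule.span F {x} := by
  have hφx : φ x ≠ 0 := (map_ne_zero _).2 hx
  rw [Submodule.mem_span_singleton]
  constructor
  · intro hv
    have hfix : φ (v / x) = v / x := by
      rw [lineInvolution_apply] at hv
      rw [map_div₀, div_eq_div_iff hφx hx]
      field_simp at hv
      linear_combination hv
    obtain ⟨c, hc⟩ := mem_range_algebraMap_of_frobeniusAlgEquivOfAlgebraic_apply_eq hfix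
    exact ⟨c, by rw [Algebra.smul_def, hc, div_mul_cancel₀ v hx]⟩
  · rintro ⟨c, rfl⟩
    rw [map_smul, lineInvolution_apply_self hx]

theorem lineInvolution_ne_one (h : finrank F T = 2) (hx : x ≠ 0) :
    lineInvolution (F := F) x ≠ 1 := by
  intro hg
  have hspan : Submodule.span F {x} = ⊤ := Submodule.eq_top_iff'.2 fun v ↦
    (lineInvolution_apply_eq_self_iff hx).1 (by rw [hg, Module.End.one_apply])
  have := finrank_span_singleton (K := F) hx
  rw [hspan, finrank_top, h] at this
  omega

theorem exists_linearIndependent_lineInvolution_apply_eq_add [CharP T 2]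
    (h : finrank F T = 2) (hx : x ≠ 0) :
    ∃ y : T, LinearIndependent F ![x, y] ∧ lineInvolution (F := F) x y = y + x := by
  set g := lineInvolution (F := F) x
  have hgg : ∀ v, g (g v) = v := fun v ↦ by
    rw [← Module.End.mul_apply, lineInvolution_mul_self h hx, Module.End.one_apply]
  obtain ⟨w, hw⟩ : ∃ w, g w ≠ w := by
    by_contra! hall
    exact lineInvolution_ne_one h hx (LinearMap.ext hall)
  have hd : g (g w - w) = g w - w := by
    rw [map_sub, hgg, ← CharTwo.neg_eq (g w - w), neg_sub]
  obtain ⟨c, hc⟩ := Submodule.mem_span_singleton.1 ((lineInvolution_apply_eq_self_iff hx).1 hd)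
  have hc0 : c ≠ 0 := by
    rintro rfl
    exact hw (sub_eq_zero.1 (by rw [← hc, zero_smul]))
  have hgy : g (c⁻¹ • w) = c⁻¹ • w + x := by
    rw [map_smul, ← sub_add_cancel (g w) w, ← hc, smul_add, smul_smul, inv_mul_cancel₀ hc0,
      one_smul, add_comm]
  refine ⟨c⁻¹ • w, LinearIndependent.pair_iff' hx |>.2 fun a ha ↦ ?_, hgy⟩
  have hfix : g (c⁻¹ • w) = c⁻¹ • w := by rw [← ha, map_smul, lineInvolution_apply_self hx]
  exact hx (by simpa [hfix] using hgy)

theorem eq_smul_one_or_eq_smul_lineInvolution (h : finrank F T = 2) (hx : x ≠ 0)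
    {u : Module.End F T} {a : T} {σ : T ≃ₐ[F] T} (hu : ∀ v, u v = a * σ v)
    (hux : u x ∈ Submodule.span F {x}) :
    (∃ c : F, u = c • 1) ∨ ∃ c : F, u = c • lineInvolution x := by
  obtain ⟨c, hc⟩ := Submodule.mem_span_singleton.1 hux
  rw [hu, Algebra.smul_def] at hc
  rcases algEquiv_eq_one_or_eq_frobeniusAlgEquivOfAlgebraic h σ with rfl | rfl
  · have ha : a = algebraMap F T c := mul_right_cancel₀ hx hc.symm
    exact .inl ⟨c, LinearMap.ext fun v ↦ by simp [hu, ha, Algebra.smul_def]⟩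
  · have hφx : φ x ≠ 0 := (map_ne_zero _).2 hx
    have ha : a = algebraMap F T c * (x / φ x) := by
      field_simp
      exact hc.symm
    refine .inr ⟨c, LinearMap.ext fun v ↦ ?_⟩
    rw [hu, ha, LinearMap.smul_apply, lineInvolution_apply, Algebra.smul_def, mul_assoc]

end LineInvolution

theorem stmt_14_general {F T : Type*} [Field F] [Field T] [Algebra F T]
    [Fintype F] [Fintype T] [CharP F 2]
    (hT : Fintype.card T = Fintype.card F ^ 2)
    (Γ : Subgroup (Module.End F T)ˣ)
    (hΓ : ∀ u : (Module.End F T)ˣ, u ∈ Γ ↔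
      ∃ a : Tˣ, ∃ σ : T ≃ₐ[F] T, ∀ v : T, (u : Module.End F T) v = (a : T) * σ v)
    (x : T) (hx : x ≠ 0) :
    ∃ g ∈ Γ, g ≠ 1 ∧ g * g = 1 ∧ (g : Module.End F T) x = x ∧
      (∃ y : T, LinearIndependent F ![x, y] ∧
        (g : Module.End F T) y = y + x) ∧
      ∀ u ∈ Γ, (u : Module.End F T) x ∈ Submodule.span F {x} →
        ((∃ c : F, (u : Module.End F T) = c • 1) ∨
          (∃ c : F, (u : Module.End F T) = c • (g : Module.End F T))) := by
  have h : finrank F T = 2 := by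
    rw [card_eq_pow_finrank (K := F) (V := T)] at hT
    exact Nat.pow_right_injective Fintype.one_lt_card hT
  have : CharP T 2 := charP_of_injective_algebraMap (algebraMap F T).injective 2
  have hgg := lineInvolution_mul_self h hx
  have hφx : frobeniusAlgEquivOfAlgebraic F T x ≠ 0 := (map_ne_zero _).2 hx
  refine ⟨⟨lineInvolution x, lineInvolution x, hgg, hgg⟩,
    (hΓ _).2 ⟨.mk0 _ (div_ne_zero hx hφx), _, lineInvolution_apply x⟩,
    fun hg ↦ lineInvolution_ne_one h hx congr(Units.val $hg), Units.ext hgg,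
    lineInvolution_apply_self hx, exists_linearIndependent_lineInvolution_apply_eq_add h hx,
    fun u hu hux ↦ ?_⟩
  obtain ⟨a, σ, hua⟩ := (hΓ u).1 hu
  exact eq_smul_one_or_eq_smul_lineInvolution h hx hua hux

/-- Let `q > 2` be even, `T = F_{q²}` viewed as a 2-dimensional
space over `F = F_q`, and let `Γ = ΓL(1,q²)` be the group of all maps
`v ↦ a·σ(v)` (`a ∈ T^×`, `σ ∈ Gal(T/F)`), acting `F`-linearly on `T`. Then for
any nonzero `x ∈ T`, the stabilizer of the `F`-line `⟨x⟩` in `Γ` equals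
`Z × C₂`: it consists exactly of the scalars and scalar multiples of a single
involution `g`, and this involution satisfies `g(x) = x` and `g(y) = y + x`
for some `y` with `x, y` an `F`-basis. -/
theorem stmt_14 {F T : Type*} [Field F] [Field T] [Algebra F T]
    [Fintype F] [Fintype T] [CharP F 2]
    (hq : 2 < Fintype.card F)
    (hT : Fintype.card T = Fintype.card F ^ 2)
    (Γ : Subgroup (Module.End F T)ˣ)
    (hΓ : ∀ u : (Module.End F T)ˣ, u ∈ Γ ↔
      ∃ a : Tˣ, ∃ σ : T ≃ₐ[F] T, ∀ v : T, (u : Module.End F T) v = (a : T) * σ v)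
    (x : T) (hx : x ≠ 0) :
    ∃ g ∈ Γ, g ≠ 1 ∧ g * g = 1 ∧ (g : Module.End F T) x = x ∧
      (∃ y : T, LinearIndependent F ![x, y] ∧
        (g : Module.End F T) y = y + x) ∧
      ∀ u ∈ Γ, (u : Module.End F T) x ∈ Submodule.span F {x} →
        ((∃ c : F, (u : Module.End F T) = c • 1) ∨
          (∃ c : F, (u : Module.End F T) = c • (g : Module.End F T))) :=
  stmt_14_general hT Γ hΓ x hx
end
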